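/- Let N ≥ 3. The set of ordered tuples μ₁ ≤ ⋯ ≤ μ_N satisfying the (1,0)-nonnegativity conditions (μ_α + μ_β ≥ 0 for all α < β) equals the set of 2-nonnegative tuples, i.e., the union over (λ₁,λ₂) ∈ Λ of the (λ₁,λ₂)-nonnegative tuples equals {μ : μ_α + μ_β ≥ 0 for all α < β}. -/

import Mathlib

/-- Membership in the parameter set Λ. -/
def InLambda (x y : ℝ) : Prop :=
  0 ≤ y ∧ y ≤ x ∧ x ≤ 1 ∧ 0 < 1 - (x + y) * y ∧ 1 - (x + y) * y ≤ x

/-- The (λ₁,λ₂)-nonnegativity conditions for a tuple. -/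
def IsLamNonneg {N : ℕ} (l1 l2 : ℝ) (μ : Fin N → ℝ) : Prop :=
  (∀ α β γ : Fin N, α < β → β < γ → 0 ≤ μ α + l1 * μ β + l2 * μ γ) ∧
  (∀ α β : Fin N, α < β → 0 ≤ l1 * μ α + (1 - (l1 + l2) * l2) * μ β)

theorem add_nonneg_of_mul_add_mul_nonneg {x c a b : ℝ} (hc : 0 < c) (hcx : c ≤ x)
    (hab : a ≤ b) (h : 0 ≤ x * a + c * b) : 0 ≤ a + b := by
  rcases le_or_gt 0 a with ha | ha
  · linarith
  · have hxa : x * a ≤ c * a := mul_le_mul_of_nonpos_right hcx ha.le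
    have : 0 ≤ c * (a + b) := by linarith
    exact nonneg_of_mul_nonneg_right this hc

theorem inLambda_one_zero : InLambda 1 0 := by
  unfold InLambda
  norm_num

theorem isLamNonneg_one_zero_iff {N : ℕ} (μ : Fin N → ℝ) :
    IsLamNonneg 1 0 μ ↔ ∀ α β : Fin N, α < β → 0 ≤ μ α + μ β := by
  simp only [IsLamNonneg, one_mul, zero_mul, add_zero, mul_zero, sub_zero]
  exact ⟨fun h => h.2, fun h => ⟨fun α β _ hαβ _ => h α β hαβ, h⟩⟩

theorem stmt_11_general (N : ℕ) (μ : Fin N → ℝ) (hmono : Monotone μ) :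
    (∃ l1 l2 : ℝ, InLambda l1 l2 ∧ IsLamNonneg l1 l2 μ) ↔
    (∀ α β : Fin N, α < β → 0 ≤ μ α + μ β) := by
  constructor
  · rintro ⟨l1, l2, ⟨-, -, -, hc, hcl1⟩, -, hpair⟩ α β hαβ
    exact add_nonneg_of_mul_add_mul_nonneg hc hcl1 (hmono hαβ.le) (hpair α β hαβ)
  · exact fun h => ⟨1, 0, inLambda_one_zero, (isLamNonneg_one_zero_iff μ).2 h⟩

theorem stmt_11 (N : ℕ) (hN : 3 ≤ N) (μ : Fin N → ℝ) (hmono : Monotone μ) :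
    (∃ l1 l2 : ℝ, InLambda l1 l2 ∧ IsLamNonneg l1 l2 μ) ↔
    (∀ α β : Fin N, α < β → 0 ≤ μ α + μ β) :=
  stmt_11_general N μ hmono
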